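/- arXiv:math/0305014 — 5 statements merged into one kernel-verified Lean document; each statement's English description precedes it below -/
import Mathlib

section
/- Under the abstract assumptions on X, D and I, and assuming the compactness condition (3.3) (for every R > 0 and t ∈ [0,T] the set R_R^t := {z ∈ X : D(z_0,z) ≤ R and I(t,z) ≤ R} is sequentially weakly compact), the incremental problem (IP) has at least one solution: there exist z_1, …, z_N ∈ X such that for each k = 1, …, N, z_k minimizes z ↦ I(t_k, z) + D(z_{k-1}, z) over X. -/
/-!
Each step is solved by the direct method. Along a minimizing sequence of
`w ↦ I(tₖ, w) + D(zₖ₋₁, w)` both `I(tₖ, w)` and, by the triangle inequality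
`D(z₀, w) ≤ D(z₀, zₖ₋₁) + D(zₖ₋₁, w)`, also `D(z₀, w)` stay bounded, so the sequence lies in one of
the compact sets of (3.3); a weak limit of a subsequence is a minimizer by weak lower
semicontinuity. The minimizer again has finite energy and finite dissipation from `z₀`, so the
recursion can go on.
-/

open Filter Topology Set MeasureTheory
open scoped ENNReal

noncomputable section

def WeakConv {X : Type*} [NormedAddCommGroup X] [NormedSpace ℝ X]
    (u : ℕ → X) (z : X) : Prop :=
  ∀ f : X →L[ℝ] ℝ, Tendsto (fun n => f (u n)) atTop (𝓝 (f z))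

def SeqWeaklyCompact {X : Type*} [NormedAddCommGroup X] [NormedSpace ℝ X]
    (S : Set X) : Prop :=
  ∀ u : ℕ → X, (∀ n, u n ∈ S) →
    ∃ z ∈ S, ∃ φ : ℕ → ℕ, StrictMono φ ∧ WeakConv (fun n => u (φ n)) z

/-- The dissipation of the curve `z` on the interval `[s,t]`, defined as the supremum
over all finite partitions `s = τ₀ < τ₁ < … < τ_N = t` of `∑ⱼ D (z τⱼ₋₁) (z τⱼ)`. -/
def Diss {X : Type*} (D : X → X → ℝ≥0∞) (z : ℝ → X) (s t : ℝ) : ℝ≥0∞ :=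
  ⨆ (N : ℕ) (τ : ℕ → ℝ) (_ : τ 0 = s) (_ : τ N = t)
    (_ : ∀ j < N, τ j < τ (j + 1)),
    ∑ j ∈ Finset.range N, D (z (τ j)) (z (τ (j + 1)))

theorem ENNReal.le_liminf_add (u v : ℕ → ℝ≥0∞) :
    liminf u atTop + liminf v atTop ≤ liminf (u + v) atTop := by
  have hmono : ∀ w : ℕ → ℝ≥0∞, Monotone fun n => ⨅ i ≥ n, w i := fun w _ _ hab =>
    le_iInf₂ fun i hi => iInf₂_le i (hab.trans hi)
  simp only [liminf_eq_iSup_iInf_of_nat, ENNReal.iSup_add_iSup_of_monotone (hmono u) (hmono v)]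
  exact iSup_mono fun n => le_iInf₂ fun i hi => add_le_add (iInf₂_le i hi) (iInf₂_le i hi)

theorem ENNReal.exists_seq_lt_tendsto_iInf {α : Type*} (F : α → ℝ≥0∞) {c : ℝ≥0∞}
    (hc : ⨅ a, F a < c) :
    ∃ u : ℕ → α, (∀ n, F (u n) < c) ∧ Tendsto (fun n => F (u n)) atTop (𝓝 (⨅ a, F a)) := by
  set m := ⨅ a, F a
  have hm : m ≠ ⊤ := hc.ne_top
  have hlt : ∀ n : ℕ, m < min c (m + (n : ℝ≥0∞)⁻¹) := fun n =>
    lt_min hc (ENNReal.lt_add_right hm (ENNReal.inv_ne_zero.2 (ENNReal.natCast_ne_top n)))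
  choose u hu using fun n => iInf_lt_iff.mp (hlt n)
  refine ⟨u, fun n => (hu n).trans_le (min_le_left _ _), ?_⟩
  have hupper : Tendsto (fun n : ℕ => m + (n : ℝ≥0∞)⁻¹) atTop (𝓝 m) := by
    simpa using tendsto_const_nhds.add ENNReal.tendsto_inv_nat_nhds_zero
  exact tendsto_of_tendsto_of_tendsto_of_le_of_le tendsto_const_nhds hupper
    (fun n => iInf_le F (u n)) fun n => ((hu n).trans_le (min_le_right _ _)).le

theorem WeakConv.const {X : Type*} [NormedAddCommGroup X] [NormedSpace ℝ X] (z : X) :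
    WeakConv (fun _ => z) z := fun _ => tendsto_const_nhds

def SeqWeaklyLSC {X : Type*} [NormedAddCommGroup X] [NormedSpace ℝ X] (F : X → ℝ≥0∞) : Prop :=
  ∀ (u : ℕ → X) (z : X), WeakConv u z → F z ≤ liminf (fun n => F (u n)) atTop

namespace SeqWeaklyLSC

variable {X : Type*} [NormedAddCommGroup X] [NormedSpace ℝ X] {F G : X → ℝ≥0∞}

theorem add (hF : SeqWeaklyLSC F) (hG : SeqWeaklyLSC G) : SeqWeaklyLSC fun z => F z + G z :=
  fun u z hu => (add_le_add (hF u z hu) (hG u z hu)).trans (ENNReal.le_liminf_add _ _)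

/-- The direct method of the calculus of variations. -/
theorem exists_forall_le (hF : SeqWeaklyLSC F) {S : Set X} (hS : SeqWeaklyCompact S)
    {c : ℝ≥0∞} (hc : ⨅ w, F w < c) (hsub : {w | F w < c} ⊆ S) : ∃ z, ∀ w, F z ≤ F w := by
  obtain ⟨u, huc, hlim⟩ := ENNReal.exists_seq_lt_tendsto_iInf F hc
  obtain ⟨z, -, φ, hφ, hz⟩ := hS u fun n => hsub (huc n)
  refine ⟨z, fun w => ?_⟩
  calc F z ≤ liminf (fun n => F (u (φ n))) atTop := hF _ z hz
    _ = ⨅ w, F w := (hlim.comp hφ.tendsto_atTop).liminf_eq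
    _ ≤ F w := iInf_le F w

end SeqWeaklyLSC

theorem exists_incremental_step {X : Type*} [NormedAddCommGroup X] [NormedSpace ℝ X]
    {D : X → X → ℝ≥0∞} {G : X → ℝ≥0∞} {z₀ y : X}
    (hD0 : D y y = 0) (hDtri : ∀ w, D z₀ w ≤ D z₀ y + D y w)
    (hlsc : SeqWeaklyLSC fun w => G w + D y w)
    (hcomp : ∀ R : ℝ, 0 < R →
      SeqWeaklyCompact {w : X | D z₀ w ≤ ENNReal.ofReal R ∧ G w ≤ ENNReal.ofReal R})
    (hGy : G y ≠ ⊤) (hDy : D z₀ y ≠ ⊤) :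
    ∃ z, (∀ w, G z + D y z ≤ G w + D y w) ∧ G z ≠ ⊤ ∧ D z₀ z ≠ ⊤ := by
  set c := G y + 1
  have hc : ⨅ w, G w + D y w < c :=
    (iInf_le _ y).trans_lt (by simpa [hD0, c] using ENNReal.lt_add_right hGy one_ne_zero)
  -- every `w` with energy below `c` lies in the compact set of level `D z₀ y + c`
  set R := (D z₀ y + c).toReal
  have hRfin : D z₀ y + c ≠ ⊤ := by finiteness
  have hR : ENNReal.ofReal R = D z₀ y + c := ENNReal.ofReal_toReal hRfin
  have hRpos : 0 < R := ENNReal.toReal_pos (by simp [c]) hRfin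
  have hsub : {w | G w + D y w < c} ⊆
      {w | D z₀ w ≤ ENNReal.ofReal R ∧ G w ≤ ENNReal.ofReal R} := fun w hw => by
    have hGw : G w ≤ c := le_self_add.trans hw.le
    have hDw : D y w ≤ c := le_add_self.trans hw.le
    rw [mem_ofPred_eq, hR]
    exact ⟨(hDtri w).trans (by gcongr), hGw.trans le_add_self⟩
  obtain ⟨z, hz⟩ := hlsc.exists_forall_le (hcomp R hRpos) hc hsub
  have hzfin : G z + D y z ≠ ⊤ := ne_top_of_le_ne_top (by simpa [hD0] using hGy) (hz y)
  obtain ⟨hGz, hDyz⟩ := ENNReal.add_ne_top.1 hzfin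
  exact ⟨z, hz, hGz, ne_top_of_le_ne_top (ENNReal.add_ne_top.2 ⟨hDy, hDyz⟩) (hDtri z)⟩

theorem exists_seq_of_forall_exists {α : Type*} {P : α → Prop} {R : ℕ → α → α → Prop}
    (h : ∀ k a, P a → ∃ b, P b ∧ R k a b) {a : α} (ha : P a) :
    ∃ x : ℕ → α, x 0 = a ∧ ∀ k, R k (x k) (x (k + 1)) := by
  choose g hgP hgR using h
  let x : ℕ → {a // P a} := fun k => Nat.rec ⟨a, ha⟩ (fun k b => ⟨g k b b.2, hgP k b b.2⟩) k
  exact ⟨fun k => (x k).1, rfl, fun k => hgR k (x k).1 (x k).2⟩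

theorem mem_Icc_of_forall_le_succ {α : Type*} [Preorder α] {t : ℕ → α} {N : ℕ}
    (ht : ∀ j < N, t j ≤ t (j + 1)) {k : ℕ} (hk : k ≤ N) : t k ∈ Icc (t 0) (t N) := by
  have hmono : MonotoneOn t (Iic N) :=
    monotoneOn_of_le_add_one ordConnected_Iic fun j _ _ hj => ht j hj
  exact ⟨hmono (Nat.zero_le N) hk (Nat.zero_le k), hmono hk self_mem_Iic hk⟩

theorem incremental_problem_has_solution_general
    {X : Type*} [NormedAddCommGroup X] [NormedSpace ℝ X]
    (T CI : ℝ)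
    -- `D` is a dissipation distance:
    (D : X → X → ℝ≥0∞)
    (hD0 : ∀ z : X, D z z = 0)
    (hDtri : ∀ z1 z2 z3 : X, D z1 z3 ≤ D z1 z2 + D z2 z3)
    (hDlsc : ∀ (u v : ℕ → X) (z w : X), WeakConv u z → WeakConv v w →
      D z w ≤ liminf (fun j => D (u j) (v j)) atTop)
    -- `I` is an energy-storage functional with partial time derivative `DI`:
    (I : ℝ → X → ℝ≥0∞) (DI : ℝ → X → ℝ)
    (hIlsc : ∀ s ∈ Icc (0:ℝ) T, ∀ (u : ℕ → X) (z : X), WeakConv u z →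
      I s z ≤ liminf (fun j => I s (u j)) atTop)
    (hIsmooth : ∀ z : X, (∃ s ∈ Icc (0:ℝ) T, I s z ≠ ⊤) →
      ∀ s ∈ Icc (0:ℝ) T, I s z ≠ ⊤ ∧
        HasDerivWithinAt (fun τ => (I τ z).toReal) (DI s z) (Icc (0:ℝ) T) s ∧
        |DI s z| ≤ CI)
    -- a partition `0 = t 0 < t 1 < … < t N = T` and an initial datum `z0`:
    (N : ℕ) (t : ℕ → ℝ) (ht0 : t 0 = 0) (htN : t N = T)
    (htlt : ∀ j < N, t j < t (j + 1))
    (z0 : X) (hz0 : I 0 z0 ≠ ⊤)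
    -- compactness condition (3.3):
    (hcomp : ∀ R : ℝ, 0 < R → ∀ s ∈ Icc (0:ℝ) T,
      SeqWeaklyCompact {w : X | D z0 w ≤ ENNReal.ofReal R ∧ I s w ≤ ENNReal.ofReal R}) :
    ∃ z : ℕ → X, z 0 = z0 ∧ ∀ k < N, ∀ w : X,
      I (t (k + 1)) (z (k + 1)) + D (z k) (z (k + 1)) ≤ I (t (k + 1)) w + D (z k) w := by
  have ht : ∀ k ≤ N, t k ∈ Icc (0:ℝ) T := fun k hk =>
    ht0 ▸ htN ▸ mem_Icc_of_forall_le_succ (fun j hj => (htlt j hj).le) hk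
  -- the invariant is time-independent: finite energy at some time spreads to all times
  let P : X → Prop := fun y => (∃ s ∈ Icc (0:ℝ) T, I s y ≠ ⊤) ∧ D z0 y ≠ ⊤
  have hstep : ∀ (k : ℕ) (y : X), P y → ∃ z, P z ∧ (k < N →
      ∀ w, I (t (k + 1)) z + D y z ≤ I (t (k + 1)) w + D y w) := by
    intro k y ⟨hIy, hDy⟩
    by_cases hk : k < N
    · have hs := ht (k + 1) hk
      obtain ⟨z, hz, hIz, hDz⟩ := exists_incremental_step (hD0 y) (hDtri z0 y)
        (SeqWeaklyLSC.add (hIlsc _ hs) fun u w hu => hDlsc _ u y w (WeakConv.const y) hu)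
        (fun R hR => hcomp R hR _ hs) (hIsmooth y hIy _ hs).1 hDy
      exact ⟨z, ⟨⟨_, hs, hIz⟩, hDz⟩, fun _ => hz⟩
    · exact ⟨y, ⟨hIy, hDy⟩, fun h => absurd h hk⟩
  obtain ⟨z, hz0', hz⟩ := exists_seq_of_forall_exists hstep
    (⟨⟨0, ht0 ▸ ht 0 (Nat.zero_le N), hz0⟩, by simp [hD0]⟩ : P z0)
  exact ⟨z, hz0', hz⟩

/-- Theorem 3.1 (existence): under the abstract assumptions on `X`, `D`, `I` and the
compactness condition (3.3), the incremental problem (IP) has at least one solution. -/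
theorem incremental_problem_has_solution
    {X : Type*} [NormedAddCommGroup X] [NormedSpace ℝ X] [CompleteSpace X]
    (T cD CI : ℝ) (hT : 0 < T) (hcD : 0 < cD) (hCI : 0 < CI)
    -- `D` is a dissipation distance:
    (D : X → X → ℝ≥0∞)
    (hD0 : ∀ z : X, D z z = 0)
    (hDtri : ∀ z1 z2 z3 : X, D z1 z3 ≤ D z1 z2 + D z2 z3)
    (hDcoer : ∀ z0 z1 : X, ENNReal.ofReal (cD * ‖z1 - z0‖) ≤ D z0 z1)
    (hDlsc : ∀ (u v : ℕ → X) (z w : X), WeakConv u z → WeakConv v w →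
      D z w ≤ liminf (fun j => D (u j) (v j)) atTop)
    -- `I` is an energy-storage functional with partial time derivative `DI`:
    (I : ℝ → X → ℝ≥0∞) (DI : ℝ → X → ℝ)
    (hIlsc : ∀ s ∈ Icc (0:ℝ) T, ∀ (u : ℕ → X) (z : X), WeakConv u z →
      I s z ≤ liminf (fun j => I s (u j)) atTop)
    (hIsmooth : ∀ z : X, (∃ s ∈ Icc (0:ℝ) T, I s z ≠ ⊤) →
      ∀ s ∈ Icc (0:ℝ) T, I s z ≠ ⊤ ∧
        HasDerivWithinAt (fun τ => (I τ z).toReal) (DI s z) (Icc (0:ℝ) T) s ∧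
        |DI s z| ≤ CI)
    -- a partition `0 = t 0 < t 1 < … < t N = T` and an initial datum `z0`:
    (N : ℕ) (hN : 1 ≤ N) (t : ℕ → ℝ) (ht0 : t 0 = 0) (htN : t N = T)
    (htlt : ∀ j < N, t j < t (j + 1))
    (z0 : X) (hz0 : I 0 z0 ≠ ⊤)
    -- compactness condition (3.3):
    (hcomp : ∀ R : ℝ, 0 < R → ∀ s ∈ Icc (0:ℝ) T,
      SeqWeaklyCompact {w : X | D z0 w ≤ ENNReal.ofReal R ∧ I s w ≤ ENNReal.ofReal R}) :
    ∃ z : ℕ → X, z 0 = z0 ∧ ∀ k < N, ∀ w : X,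
      I (t (k + 1)) (z (k + 1)) + D (z k) (z (k + 1)) ≤ I (t (k + 1)) w + D (z k) w :=
  incremental_problem_has_solution_general T CI D hD0 hDtri hDlsc I DI hIlsc hIsmooth N t ht0 htN
    htlt z0 hz0 hcomp
end
end

section
/- Every solution (z_1, …, z_N) of the incremental problem (IP) satisfies, for each k = 1, …, N, the a priori energy-dissipation bound: I(t_k, z_k) + Σ_{j=1}^{k} D(z_{j-1}, z_j) ≤ I(0, z_0) + C_I · T. -/
/-!
Testing the minimality of `z (k+1)` against the competitor `z k` gives, as `D (z k) (z k) = 0`,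
`I(t_{k+1}, z_{k+1}) + D(z_k, z_{k+1}) ≤ I(t_{k+1}, z_k) ≤ I(t_k, z_k) + C_I (t_{k+1} - t_k)`,
the second step by the mean value inequality for `t ↦ I(t, z_k)`. Summing these one-step
inequalities telescopes to the bound.
-/

open Filter Topology Set MeasureTheory
open scoped ENNReal

noncomputable section

theorem ENNReal.le_add_ofReal_of_hasDerivWithinAt_toReal {f : ℝ → ℝ≥0∞} {f' : ℝ → ℝ}
    {s : Set ℝ} {C a b : ℝ} (hs : Convex ℝ s)
    (hf : ∀ x ∈ s, HasDerivWithinAt (fun y => (f y).toReal) (f' x) s x)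
    (hbound : ∀ x ∈ s, |f' x| ≤ C) (ha : a ∈ s) (hb : b ∈ s) (hab : a ≤ b) (hfb : f b ≠ ⊤) :
    f b ≤ f a + ENNReal.ofReal (C * (b - a)) := by
  have hmvt : |(f b).toReal - (f a).toReal| ≤ C * |b - a| :=
    hs.norm_image_sub_le_of_norm_hasDerivWithin_le hf hbound ha hb
  rw [abs_of_nonneg (sub_nonneg.mpr hab)] at hmvt
  calc f b = ENNReal.ofReal (f b).toReal := (ENNReal.ofReal_toReal hfb).symm
    _ ≤ ENNReal.ofReal ((f a).toReal + C * (b - a)) :=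
        ENNReal.ofReal_le_ofReal (by linarith [le_abs_self ((f b).toReal - (f a).toReal)])
    _ ≤ ENNReal.ofReal (f a).toReal + ENNReal.ofReal (C * (b - a)) := ENNReal.ofReal_add_le
    _ ≤ f a + ENNReal.ofReal (C * (b - a)) := by gcongr; exact ENNReal.ofReal_toReal_le

theorem add_sum_range_le_add_sum_range {M : Type*} [AddCommMonoid M] [PartialOrder M]
    [IsOrderedAddMonoid M] {e d c : ℕ → M} {n : ℕ}
    (hstep : ∀ k < n, e (k + 1) + d k ≤ e k + c k) :
    e n + ∑ k ∈ Finset.range n, d k ≤ e 0 + ∑ k ∈ Finset.range n, c k := by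
  induction n with
  | zero => simp
  | succ n ih =>
    calc e (n + 1) + ∑ k ∈ Finset.range (n + 1), d k
        = (e (n + 1) + d n) + ∑ k ∈ Finset.range n, d k := by
          rw [Finset.sum_range_succ, add_comm _ (d n), add_assoc]
      _ ≤ (e n + c n) + ∑ k ∈ Finset.range n, d k := add_le_add (hstep n n.lt_succ_self) le_rfl
      _ = (e n + ∑ k ∈ Finset.range n, d k) + c n := add_right_comm _ _ _
      _ ≤ (e 0 + ∑ k ∈ Finset.range n, c k) + c n :=
          add_le_add (ih fun k hk => hstep k (hk.trans n.lt_succ_self)) le_rfl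
      _ = e 0 + ∑ k ∈ Finset.range (n + 1), c k := by rw [Finset.sum_range_succ, add_assoc]

theorem ENNReal.sum_range_ofReal_mul_sub {t : ℕ → ℝ} {C : ℝ} {n : ℕ} (hC : 0 ≤ C)
    (ht : ∀ k < n, t k ≤ t (k + 1)) :
    ∑ k ∈ Finset.range n, ENNReal.ofReal (C * (t (k + 1) - t k))
      = ENNReal.ofReal (C * (t n - t 0)) := by
  rw [← ENNReal.ofReal_sum_of_nonneg, ← Finset.mul_sum, Finset.sum_range_sub]
  intro k hk
  exact mul_nonneg hC (sub_nonneg.mpr (ht k (Finset.mem_range.mp hk)))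

theorem energy_le_add_of_hasDerivWithinAt {X : Type*} {I : ℝ → X → ℝ≥0∞} {DI : ℝ → X → ℝ}
    {T CI : ℝ}
    (hIsmooth : ∀ z : X, (∃ s ∈ Icc (0:ℝ) T, I s z ≠ ⊤) →
      ∀ s ∈ Icc (0:ℝ) T, I s z ≠ ⊤ ∧
        HasDerivWithinAt (fun τ => (I τ z).toReal) (DI s z) (Icc (0:ℝ) T) s ∧
        |DI s z| ≤ CI)
    (w : X) {a b : ℝ} (ha : a ∈ Icc (0:ℝ) T) (hb : b ∈ Icc (0:ℝ) T) (hab : a ≤ b) :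
    I b w ≤ I a w + ENNReal.ofReal (CI * (b - a)) := by
  by_cases hfin : I a w = ⊤
  · simp [hfin]
  have hsmooth := hIsmooth w ⟨a, ha, hfin⟩
  exact ENNReal.le_add_ofReal_of_hasDerivWithinAt_toReal (convex_Icc 0 T)
    (fun s hs => (hsmooth s hs).2.1) (fun s hs => (hsmooth s hs).2.2) ha hb hab (hsmooth b hb).1

theorem incremental_energy_dissipation_bound_general
    {X : Type*}
    (T CI : ℝ) (hCI : 0 < CI)
    -- `D` is a dissipation distance:
    (D : X → X → ℝ≥0∞)
    (hD0 : ∀ z : X, D z z = 0)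
    -- `I` is an energy-storage functional with partial time derivative `DI`:
    (I : ℝ → X → ℝ≥0∞) (DI : ℝ → X → ℝ)
    (hIsmooth : ∀ z : X, (∃ s ∈ Icc (0:ℝ) T, I s z ≠ ⊤) →
      ∀ s ∈ Icc (0:ℝ) T, I s z ≠ ⊤ ∧
        HasDerivWithinAt (fun τ => (I τ z).toReal) (DI s z) (Icc (0:ℝ) T) s ∧
        |DI s z| ≤ CI)
    -- a partition `0 = t 0 < t 1 < … < t N = T` and an initial datum `z0`:
    (N : ℕ) (t : ℕ → ℝ) (ht0 : t 0 = 0) (htN : t N = T)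
    (htlt : ∀ j < N, t j < t (j + 1))
    (z0 : X)
    -- `z 1, …, z N` is a solution of the incremental problem (IP):
    (z : ℕ → X) (hzinit : z 0 = z0)
    (hmin : ∀ k < N, ∀ w : X,
      I (t (k + 1)) (z (k + 1)) + D (z k) (z (k + 1)) ≤ I (t (k + 1)) w + D (z k) w) :
    ∀ k : ℕ, 1 ≤ k → k ≤ N →
      I (t k) (z k) + ∑ j ∈ Finset.range k, D (z j) (z (j + 1))
        ≤ I 0 z0 + ENNReal.ofReal (CI * T) := by
  intro k _ hkN
  have htmono : MonotoneOn t (Iic N) :=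
    (strictMonoOn_Iic_of_lt_succ fun m hm => by simpa using htlt m hm).monotoneOn
  have htmem : ∀ j ≤ N, t j ∈ Icc (0:ℝ) T := fun j hj =>
    ⟨ht0 ▸ htmono (Nat.zero_le N) hj (Nat.zero_le j), htN ▸ htmono hj (mem_Iic.mpr le_rfl) hj⟩
  have hstep : ∀ j < k, I (t (j + 1)) (z (j + 1)) + D (z j) (z (j + 1))
      ≤ I (t j) (z j) + ENNReal.ofReal (CI * (t (j + 1) - t j)) := fun j hj =>
    calc _ ≤ I (t (j + 1)) (z j) := by simpa [hD0] using hmin j (by omega) (z j)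
      _ ≤ _ := energy_le_add_of_hasDerivWithinAt hIsmooth (z j) (htmem j (by omega))
          (htmem (j + 1) (by omega)) (htlt j (by omega)).le
  calc _ ≤ I (t 0) (z 0) + ENNReal.ofReal (CI * (t k - t 0)) := by
        rw [← ENNReal.sum_range_ofReal_mul_sub hCI.le fun j hj => (htlt j (by omega)).le]
        exact add_sum_range_le_add_sum_range (e := fun j => I (t j) (z j)) hstep
    _ ≤ I 0 z0 + ENNReal.ofReal (CI * T) := by
        rw [ht0, hzinit, sub_zero]
        gcongr
        exact (htmem k hkN).2

/-- Theorem 3.1(iii): every solution of (IP) satisfies the a priori energy-dissipation bound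
`I(t_k,z_k) + ∑_(j=1)^k D(z_(j-1),z_j) ≤ I(0,z_0) + C_I·T`. -/
theorem incremental_energy_dissipation_bound
    {X : Type*} [NormedAddCommGroup X] [NormedSpace ℝ X] [CompleteSpace X]
    (T cD CI : ℝ) (hT : 0 < T) (hcD : 0 < cD) (hCI : 0 < CI)
    -- `D` is a dissipation distance:
    (D : X → X → ℝ≥0∞)
    (hD0 : ∀ z : X, D z z = 0)
    (hDtri : ∀ z1 z2 z3 : X, D z1 z3 ≤ D z1 z2 + D z2 z3)
    (hDcoer : ∀ z0 z1 : X, ENNReal.ofReal (cD * ‖z1 - z0‖) ≤ D z0 z1)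
    (hDlsc : ∀ (u v : ℕ → X) (z w : X), WeakConv u z → WeakConv v w →
      D z w ≤ liminf (fun j => D (u j) (v j)) atTop)
    -- `I` is an energy-storage functional with partial time derivative `DI`:
    (I : ℝ → X → ℝ≥0∞) (DI : ℝ → X → ℝ)
    (hIlsc : ∀ s ∈ Icc (0:ℝ) T, ∀ (u : ℕ → X) (z : X), WeakConv u z →
      I s z ≤ liminf (fun j => I s (u j)) atTop)
    (hIsmooth : ∀ z : X, (∃ s ∈ Icc (0:ℝ) T, I s z ≠ ⊤) →
      ∀ s ∈ Icc (0:ℝ) T, I s z ≠ ⊤ ∧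
        HasDerivWithinAt (fun τ => (I τ z).toReal) (DI s z) (Icc (0:ℝ) T) s ∧
        |DI s z| ≤ CI)
    -- a partition `0 = t 0 < t 1 < … < t N = T` and an initial datum `z0`:
    (N : ℕ) (hN : 1 ≤ N) (t : ℕ → ℝ) (ht0 : t 0 = 0) (htN : t N = T)
    (htlt : ∀ j < N, t j < t (j + 1))
    (z0 : X) (hz0 : I 0 z0 ≠ ⊤)
    -- `z 1, …, z N` is a solution of the incremental problem (IP):
    (z : ℕ → X) (hzinit : z 0 = z0)
    (hmin : ∀ k < N, ∀ w : X,
      I (t (k + 1)) (z (k + 1)) + D (z k) (z (k + 1)) ≤ I (t (k + 1)) w + D (z k) w) :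
    ∀ k : ℕ, 1 ≤ k → k ≤ N →
      I (t k) (z k) + ∑ j ∈ Finset.range k, D (z j) (z (j + 1))
        ≤ I 0 z0 + ENNReal.ofReal (CI * T) :=
  incremental_energy_dissipation_bound_general T CI hCI D hD0 I DI hIsmooth N t ht0 htN htlt z0 z
    hzinit hmin
end
end

section
/- Every solution (z_1, …, z_N) of the incremental problem (IP) satisfies, for each k = 1, …, N, the norm bound: ‖z_k‖ ≤ ‖z_0‖ + (I(0, z_0) + C_I · T)/c_D. -/
/-!
Testing the minimality of `z (k+1)` against the previous state `z k`, where `D` vanishes, and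
using that `I(·, z)` grows by at most `C_I (t_{k+1} - t_k)` between consecutive times, the
quantities `I(t_k, z_k) + ∑_{j<k} D(z_j, z_{j+1})` increase by at most `C_I (t_{k+1} - t_k)` per
step, hence stay below `I(0, z_0) + C_I T`. By the triangle inequality the dissipation sum
dominates `D(z_0, z_k)`, and coercivity of `D` turns this into a bound on `‖z_k - z_0‖`.
-/

open Filter Topology Set MeasureTheory
open scoped ENNReal

noncomputable section

theorem le_sum_range_of_triangle {α M : Type*} [AddCommMonoid M] [PartialOrder M]
    [IsOrderedAddMonoid M] (D : α → α → M) (hD0 : ∀ x, D x x = 0)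
    (hDtri : ∀ x y w, D x w ≤ D x y + D y w) (z : ℕ → α) (k : ℕ) :
    D (z 0) (z k) ≤ ∑ j ∈ Finset.range k, D (z j) (z (j + 1)) := by
  induction k with
  | zero => simp [hD0]
  | succ k ih =>
    rw [Finset.sum_range_succ]
    exact (hDtri _ (z k) _).trans (add_le_add_left ih _)

theorem ENNReal.sum_range_ofReal_sub (c : ℕ → ℝ) (k : ℕ) (hc : ∀ j < k, c j ≤ c (j + 1)) :
    ∑ j ∈ Finset.range k, ENNReal.ofReal (c (j + 1) - c j) = ENNReal.ofReal (c k - c 0) := by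
  rw [← ENNReal.ofReal_sum_of_nonneg fun j hj => sub_nonneg.mpr (hc j (Finset.mem_range.mp hj)),
    Finset.sum_range_sub]

theorem mem_Icc_of_le_succ {β : Type*} [Preorder β] {t : ℕ → β} {N : ℕ}
    (ht : ∀ j < N, t j ≤ t (j + 1)) {j : ℕ} (hj : j ≤ N) : t j ∈ Icc (t 0) (t N) := by
  have hmono : MonotoneOn t (Iic N) :=
    monotoneOn_of_le_succ ordConnected_Iic fun a _ _ ha => ht a (Order.succ_le_iff.mp ha)
  exact ⟨hmono (Nat.zero_le N) hj (Nat.zero_le j), hmono hj (mem_Iic.mpr le_rfl) hj⟩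

theorem ENNReal.le_add_ofReal_mul_of_hasDerivWithinAt {f : ℝ → ℝ≥0∞} {f' : ℝ → ℝ} {s : Set ℝ}
    {C a b : ℝ} (hs : Convex ℝ s)
    (hf : ∀ x ∈ s, HasDerivWithinAt (fun τ => (f τ).toReal) (f' x) s x)
    (hf' : ∀ x ∈ s, |f' x| ≤ C) (ha : a ∈ s) (hb : b ∈ s) (hab : a ≤ b) (hfb : f b ≠ ⊤) :
    f b ≤ f a + ENNReal.ofReal (C * (b - a)) := by
  have hlip : (f b).toReal - (f a).toReal ≤ C * (b - a) := by
    have := hs.norm_image_sub_le_of_norm_hasDerivWithin_le hf (by simpa using hf') ha hb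
    rw [Real.norm_eq_abs, Real.norm_eq_abs, abs_of_nonneg (sub_nonneg.mpr hab)] at this
    exact (le_abs_self _).trans this
  calc f b = ENNReal.ofReal (f b).toReal := (ENNReal.ofReal_toReal hfb).symm
    _ ≤ ENNReal.ofReal ((f a).toReal + C * (b - a)) := ENNReal.ofReal_le_ofReal (by linarith)
    _ ≤ ENNReal.ofReal (f a).toReal + ENNReal.ofReal (C * (b - a)) := ENNReal.ofReal_add_le
    _ ≤ f a + ENNReal.ofReal (C * (b - a)) := by gcongr; exact ENNReal.ofReal_toReal_le

theorem energy_le_add_ofReal_mul_sub {X : Type*} {T C : ℝ} {I : ℝ → X → ℝ≥0∞}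
    {DI : ℝ → X → ℝ}
    (hIsmooth : ∀ z : X, (∃ s ∈ Icc (0:ℝ) T, I s z ≠ ⊤) →
      ∀ s ∈ Icc (0:ℝ) T, I s z ≠ ⊤ ∧
        HasDerivWithinAt (fun τ => (I τ z).toReal) (DI s z) (Icc (0:ℝ) T) s ∧
        |DI s z| ≤ C)
    (z : X) {s s' : ℝ} (hs : s ∈ Icc (0:ℝ) T) (hs' : s' ∈ Icc (0:ℝ) T) (hss' : s ≤ s') :
    I s' z ≤ I s z + ENNReal.ofReal (C * (s' - s)) := by
  by_cases hfin : I s z = ⊤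
  · simp [hfin]
  have hsmooth := hIsmooth z ⟨s, hs, hfin⟩
  exact ENNReal.le_add_ofReal_mul_of_hasDerivWithinAt (convex_Icc 0 T)
    (fun x hx => (hsmooth x hx).2.1) (fun x hx => (hsmooth x hx).2.2) hs hs' hss'
    (hsmooth s' hs').1

theorem energy_add_dissipation_le_of_incremental {α M : Type*} [AddCommMonoid M] [PartialOrder M]
    [IsOrderedAddMonoid M] (E : ℕ → α → M) (D : α → α → M) (δ : ℕ → M) (z : ℕ → α) (n : ℕ)
    (hgrowth : ∀ k < n, E (k + 1) (z k) ≤ E k (z k) + δ k)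
    (hstep : ∀ k < n, E (k + 1) (z (k + 1)) + D (z k) (z (k + 1)) ≤ E (k + 1) (z k)) :
    ∀ k ≤ n, E k (z k) + ∑ j ∈ Finset.range k, D (z j) (z (j + 1))
      ≤ E 0 (z 0) + ∑ j ∈ Finset.range k, δ j := by
  intro k hk
  induction k with
  | zero => simp
  | succ k ih =>
    calc E (k + 1) (z (k + 1)) + ∑ j ∈ Finset.range (k + 1), D (z j) (z (j + 1))
        = (E (k + 1) (z (k + 1)) + D (z k) (z (k + 1)))
          + ∑ j ∈ Finset.range k, D (z j) (z (j + 1)) := by rw [Finset.sum_range_succ]; abel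
      _ ≤ (E k (z k) + δ k) + ∑ j ∈ Finset.range k, D (z j) (z (j + 1)) :=
          add_le_add_left ((hstep k hk).trans (hgrowth k hk)) _
      _ = (E k (z k) + ∑ j ∈ Finset.range k, D (z j) (z (j + 1))) + δ k := by abel
      _ ≤ (E 0 (z 0) + ∑ j ∈ Finset.range k, δ j) + δ k :=
          add_le_add_left (ih (by omega)) _
      _ = E 0 (z 0) + ∑ j ∈ Finset.range (k + 1), δ j := by rw [Finset.sum_range_succ, add_assoc]

theorem incremental_norm_bound_general
    {X : Type*} [NormedAddCommGroup X] [NormedSpace ℝ X]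
    (T cD CI : ℝ) (hcD : 0 < cD) (hCI : 0 < CI)
    -- `D` is a dissipation distance:
    (D : X → X → ℝ≥0∞)
    (hD0 : ∀ z : X, D z z = 0)
    (hDtri : ∀ z1 z2 z3 : X, D z1 z3 ≤ D z1 z2 + D z2 z3)
    (hDcoer : ∀ z0 z1 : X, ENNReal.ofReal (cD * ‖z1 - z0‖) ≤ D z0 z1)
    -- `I` is an energy-storage functional with partial time derivative `DI`:
    (I : ℝ → X → ℝ≥0∞) (DI : ℝ → X → ℝ)
    (hIsmooth : ∀ z : X, (∃ s ∈ Icc (0:ℝ) T, I s z ≠ ⊤) →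
      ∀ s ∈ Icc (0:ℝ) T, I s z ≠ ⊤ ∧
        HasDerivWithinAt (fun τ => (I τ z).toReal) (DI s z) (Icc (0:ℝ) T) s ∧
        |DI s z| ≤ CI)
    -- a partition `0 = t 0 < t 1 < … < t N = T` and an initial datum `z0`:
    (N : ℕ) (t : ℕ → ℝ) (ht0 : t 0 = 0) (htN : t N = T)
    (htlt : ∀ j < N, t j < t (j + 1))
    (z0 : X) (hz0 : I 0 z0 ≠ ⊤)
    -- `z 1, …, z N` is a solution of the incremental problem (IP):
    (z : ℕ → X) (hzinit : z 0 = z0)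
    (hmin : ∀ k < N, ∀ w : X,
      I (t (k + 1)) (z (k + 1)) + D (z k) (z (k + 1)) ≤ I (t (k + 1)) w + D (z k) w) :
    ∀ k : ℕ, 1 ≤ k → k ≤ N →
      ‖z k‖ ≤ ‖z0‖ + ((I 0 z0).toReal + CI * T) / cD := by
  intro k _ hkN
  have ht : ∀ j ≤ N, t j ∈ Icc 0 T := fun j hj =>
    ht0 ▸ htN ▸ mem_Icc_of_le_succ (fun i hi => (htlt i hi).le) hj
  have henergy := energy_add_dissipation_le_of_incremental (fun j => I (t j)) D
    (fun j => ENNReal.ofReal (CI * t (j + 1) - CI * t j)) z N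
    (fun j hj => mul_sub CI _ _ ▸ energy_le_add_ofReal_mul_sub hIsmooth (z j)
      (ht j hj.le) (ht (j + 1) hj) (htlt j hj).le)
    (fun j hj => by simpa [hD0] using hmin j hj (z j)) k hkN
  have hbound : ENNReal.ofReal (cD * ‖z k - z0‖) ≤ I 0 z0 + ENNReal.ofReal (CI * t k) :=
    calc ENNReal.ofReal (cD * ‖z k - z0‖) ≤ D z0 (z k) := hDcoer z0 (z k)
      _ ≤ ∑ j ∈ Finset.range k, D (z j) (z (j + 1)) :=
          hzinit ▸ le_sum_range_of_triangle D hD0 hDtri z k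
      _ ≤ I (t k) (z k) + ∑ j ∈ Finset.range k, D (z j) (z (j + 1)) := le_add_self
      _ ≤ I (t 0) (z 0) + ∑ j ∈ Finset.range k, ENNReal.ofReal (CI * t (j + 1) - CI * t j) :=
          henergy
      _ = I 0 z0 + ENNReal.ofReal (CI * t k) := by
          rw [ENNReal.sum_range_ofReal_sub (fun j => CI * t j) k fun j hj =>
            mul_le_mul_of_nonneg_left (htlt j (by omega)).le hCI.le, ht0, hzinit, mul_zero,
            sub_zero]
  have hreal : cD * ‖z k - z0‖ ≤ (I 0 z0).toReal + CI * t k := by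
    rwa [ENNReal.ofReal_le_iff_le_toReal (by finiteness), ENNReal.toReal_add hz0 (by finiteness),
      ENNReal.toReal_ofReal (mul_nonneg hCI.le (ht k hkN).1)] at hbound
  calc ‖z k‖ ≤ ‖z0‖ + ‖z k - z0‖ := norm_le_norm_add_norm_sub' _ _
    _ ≤ ‖z0‖ + ((I 0 z0).toReal + CI * T) / cD := by
        rw [add_le_add_iff_left, le_div_iff₀ hcD]
        nlinarith [(ht k hkN).2]

/-- Theorem 3.1(iv): every solution of (IP) satisfies the norm bound
`‖z_k‖ ≤ ‖z_0‖ + (I(0,z_0) + C_I·T)/c_D`. -/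
theorem incremental_norm_bound
    {X : Type*} [NormedAddCommGroup X] [NormedSpace ℝ X] [CompleteSpace X]
    (T cD CI : ℝ) (hT : 0 < T) (hcD : 0 < cD) (hCI : 0 < CI)
    -- `D` is a dissipation distance:
    (D : X → X → ℝ≥0∞)
    (hD0 : ∀ z : X, D z z = 0)
    (hDtri : ∀ z1 z2 z3 : X, D z1 z3 ≤ D z1 z2 + D z2 z3)
    (hDcoer : ∀ z0 z1 : X, ENNReal.ofReal (cD * ‖z1 - z0‖) ≤ D z0 z1)
    (hDlsc : ∀ (u v : ℕ → X) (z w : X), WeakConv u z → WeakConv v w →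
      D z w ≤ liminf (fun j => D (u j) (v j)) atTop)
    -- `I` is an energy-storage functional with partial time derivative `DI`:
    (I : ℝ → X → ℝ≥0∞) (DI : ℝ → X → ℝ)
    (hIlsc : ∀ s ∈ Icc (0:ℝ) T, ∀ (u : ℕ → X) (z : X), WeakConv u z →
      I s z ≤ liminf (fun j => I s (u j)) atTop)
    (hIsmooth : ∀ z : X, (∃ s ∈ Icc (0:ℝ) T, I s z ≠ ⊤) →
      ∀ s ∈ Icc (0:ℝ) T, I s z ≠ ⊤ ∧
        HasDerivWithinAt (fun τ => (I τ z).toReal) (DI s z) (Icc (0:ℝ) T) s ∧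
        |DI s z| ≤ CI)
    -- a partition `0 = t 0 < t 1 < … < t N = T` and an initial datum `z0`:
    (N : ℕ) (hN : 1 ≤ N) (t : ℕ → ℝ) (ht0 : t 0 = 0) (htN : t N = T)
    (htlt : ∀ j < N, t j < t (j + 1))
    (z0 : X) (hz0 : I 0 z0 ≠ ⊤)
    -- `z 1, …, z N` is a solution of the incremental problem (IP):
    (z : ℕ → X) (hzinit : z 0 = z0)
    (hmin : ∀ k < N, ∀ w : X,
      I (t (k + 1)) (z (k + 1)) + D (z k) (z (k + 1)) ≤ I (t (k + 1)) w + D (z k) w) :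
    ∀ k : ℕ, 1 ≤ k → k ≤ N →
      ‖z k‖ ≤ ‖z0‖ + ((I 0 z0).toReal + CI * T) / cD :=
  incremental_norm_bound_general T cD CI hcD hCI D hD0 hDtri hDcoer I DI hIsmooth N t ht0 htN htlt
    z0 hz0 z hzinit hmin
end
end

section
/- (Concatenation of solutions.) Let 0 < t < T. If z_1 : [0,t] → X satisfies (S) and (E) on [0,t], z_2 : [t,T] → X satisfies (S) and (E) on [t,T], and z_1(t) = z_2(t), then the concatenated curve z : [0,T] → X, defined by z(s) = z_1(s) for s ∈ [0,t] and z(s) = z_2(s) for s ∈ (t,T], satisfies (S) and (E) on [0,T]. -/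
open Filter Topology Set MeasureTheory
open scoped ENNReal

noncomputable section

/-- A curve `z` solves the rate-independent model `(D, I)` on the interval `[a,b]` if the
global stability (S) and the energy inequality (E) hold there; `DI` denotes the partial time
derivative `∂ₜ I`. -/
def IsSolutionOn {X : Type*} [NormedAddCommGroup X]
    (D : X → X → ℝ≥0∞) (I : ℝ → X → ℝ≥0∞) (DI : ℝ → X → ℝ)
    (z : ℝ → X) (a b : ℝ) : Prop :=
  (∀ s ∈ Icc a b, ∀ w : X, I s (z s) ≤ I s w + D (z s) w) ∧
  (∀ t0 t1 : ℝ, a ≤ t0 → t0 < t1 → t1 ≤ b →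
    (I t1 (z t1) : EReal) + (Diss D z t0 t1 : EReal)
      ≤ (I t0 (z t0) : EReal) + ((∫ s in t0..t1, DI s (z s) : ℝ) : EReal))

/-!
(S) is pointwise in time, so only (E) across the junction `t₀ < t < t₁` needs work: add the
energy inequalities on `[t₀, t]` and `[t, t₁]`. The dissipation is subadditive, since a
partition of `[t₀, t₁]` refined at `t` only grows by the triangle inequality for `D`, and the
work integral splits at `t`. The latter needs `s ↦ ∂ₜI(s, z s)` to be integrable. It is bounded
by `C_I` because the energy stays finite, and it is measurable: `z` has finite `D`-variation, so
by coercivity it is continuous off the countably many jumps of its variation. Also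
`∂ₜI(s, z s)` is the a.e. limit of difference quotients of `I` along `z`, and `I` is jointly
measurable because it is continuous in time and lower semicontinuous in the state.
-/

structure TimePartition (s t : ℝ) where
  N : ℕ
  τ : ℕ → ℝ
  τ_zero : τ 0 = s
  τ_last : τ N = t
  lt_succ : ∀ j < N, τ j < τ (j + 1)

namespace TimePartition

variable {s t : ℝ}

theorem mem_Icc (p : TimePartition s t) {j : ℕ} (hj : j ≤ p.N) : p.τ j ∈ Icc s t := by
  have hmono : StrictMonoOn p.τ (Iic p.N) := strictMonoOn_Iic_of_lt_succ p.lt_succ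
  constructor
  · exact p.τ_zero.symm.trans_le (hmono.monotoneOn (Nat.zero_le p.N) hj (Nat.zero_le j))
  · exact (hmono.monotoneOn hj (mem_Iic.2 le_rfl) hj).trans_eq p.τ_last

theorem nonempty (h : s ≤ t) : Nonempty (TimePartition s t) := by
  rcases h.eq_or_lt with rfl | h
  · exact ⟨⟨0, fun _ => s, rfl, rfl, by simp⟩⟩
  · exact ⟨⟨1, fun j => if j = 0 then s else t, rfl, rfl, by simpa using h⟩⟩

variable {X : Type*} (D : X → X → ℝ≥0∞) (z : ℝ → X)

def dissSum (p : TimePartition s t) : ℝ≥0∞ :=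
  ∑ j ∈ Finset.range p.N, D (z (p.τ j)) (z (p.τ (j + 1)))

end TimePartition

section Dissipation

variable {X : Type*} (D : X → X → ℝ≥0∞) (z : ℝ → X)

theorem Diss_eq_iSup (s t : ℝ) : Diss D z s t = ⨆ p : TimePartition s t, p.dissSum D z :=
  le_antisymm
    (iSup₂_le fun N τ => iSup₂_le fun h0 hN => iSup_le fun hτ =>
      le_iSup (fun p : TimePartition s t => p.dissSum D z) ⟨N, τ, h0, hN, hτ⟩)
    (iSup_le fun p => le_iSup₂_of_le p.N p.τ <| le_iSup₂_of_le p.τ_zero p.τ_last <|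
      le_iSup_of_le p.lt_succ le_rfl)

theorem TimePartition.dissSum_le_Diss {s t : ℝ} (p : TimePartition s t) :
    p.dissSum D z ≤ Diss D z s t :=
  (Diss_eq_iSup D z s t).symm ▸ le_iSup (fun p : TimePartition s t => p.dissSum D z) p

variable {D z}

theorem Diss_congr {z' : ℝ → X} {s t : ℝ} (h : EqOn z z' (Icc s t)) :
    Diss D z s t = Diss D z' s t := by
  simp only [Diss_eq_iSup, TimePartition.dissSum]
  refine iSup_congr fun p => Finset.sum_congr rfl fun j hj => ?_
  rw [Finset.mem_range] at hj
  rw [h (p.mem_Icc hj.le), h (p.mem_Icc hj)]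

theorem Diss_add_le {s r u : ℝ} (hsr : s ≤ r) (hru : r < u) :
    Diss D z s r + D (z r) (z u) ≤ Diss D z s u := by
  have := TimePartition.nonempty hsr
  rw [Diss_eq_iSup, ENNReal.iSup_add]
  refine iSup_le fun p => ?_
  let q : TimePartition s u :=
    { N := p.N + 1
      τ := fun j => if j ≤ p.N then p.τ j else u
      τ_zero := by simp [p.τ_zero]
      τ_last := by simp
      lt_succ := fun j hj => by
        rcases (Nat.lt_succ_iff.mp hj).lt_or_eq with hj | rfl
        · simpa [hj.le, Nat.succ_le_of_lt hj] using p.lt_succ j hj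
        · simpa [p.τ_last] using hru }
  have hq : q.dissSum D z = p.dissSum D z + D (z r) (z u) := by
    simp only [q, TimePartition.dissSum, Finset.sum_range_succ, le_refl, if_true,
      Nat.not_succ_le_self, if_false, p.τ_last]
    congr 1
    refine Finset.sum_congr rfl fun j hj => ?_
    rw [Finset.mem_range] at hj
    simp [hj.le, Nat.succ_le_of_lt hj]
  exact hq ▸ q.dissSum_le_Diss D z

theorem Diss_mono_right {s r u : ℝ} (hsr : s ≤ r) (hru : r ≤ u) :
    Diss D z s r ≤ Diss D z s u := by
  rcases hru.eq_or_lt with rfl | hru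
  · exact le_rfl
  · exact le_self_add.trans (Diss_add_le hsr hru)

theorem sum_le_Diss_add_Diss (hDtri : ∀ x y w : X, D x w ≤ D x y + D y w) {s m : ℝ}
    {τ : ℕ → ℝ} (h0 : τ 0 = s) (N : ℕ)
    (hτ : ∀ j < N, τ j < τ (j + 1)) (hmN : m ≤ τ N) :
    ∑ j ∈ Finset.range N, D (z (τ j)) (z (τ (j + 1))) ≤ Diss D z s m + Diss D z m (τ N) := by
  induction N with
  | zero => simp
  | succ N ih =>
    have hτ' : ∀ j < N, τ j < τ (j + 1) := fun j hj => hτ j (hj.trans N.lt_succ_self)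
    have hlast : τ N < τ (N + 1) := hτ N N.lt_succ_self
    rw [Finset.sum_range_succ]
    rcases le_or_gt m (τ N) with hm | hm
    · calc _ ≤ Diss D z s m + Diss D z m (τ N) + D (z (τ N)) (z (τ (N + 1))) := by
            gcongr; exact ih hτ' hm
        _ ≤ Diss D z s m + Diss D z m (τ (N + 1)) := by
            rw [add_assoc]; gcongr; exact Diss_add_le hm hlast
    · have hsN : s ≤ τ N := (TimePartition.mem_Icc ⟨N, τ, h0, rfl, hτ'⟩ le_rfl).1
      have hfirst := TimePartition.dissSum_le_Diss D z ⟨N, τ, h0, rfl, hτ'⟩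
      rcases hmN.eq_or_lt with hmN | hmN
      · calc _ ≤ Diss D z s (τ N) + D (z (τ N)) (z m) := by
              rw [← hmN]; gcongr; exact hfirst
          _ ≤ Diss D z s m + Diss D z m (τ (N + 1)) :=
              (Diss_add_le hsN hm).trans le_self_add
      · have hm_single : D (z m) (z (τ (N + 1))) ≤ Diss D z m (τ (N + 1)) :=
          le_add_self.trans (Diss_add_le le_rfl hmN)
        calc _ ≤ Diss D z s (τ N) + (D (z (τ N)) (z m) + D (z m) (z (τ (N + 1)))) := by
              gcongr
              · exact hfirst
              · exact hDtri _ _ _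
          _ = (Diss D z s (τ N) + D (z (τ N)) (z m)) + D (z m) (z (τ (N + 1))) :=
              (add_assoc _ _ _).symm
          _ ≤ Diss D z s m + Diss D z m (τ (N + 1)) :=
              add_le_add (Diss_add_le hsN hm) hm_single

theorem Diss_le_add (hDtri : ∀ x y w : X, D x w ≤ D x y + D y w) {s m t : ℝ} (hmt : m ≤ t) :
    Diss D z s t ≤ Diss D z s m + Diss D z m t := by
  rw [Diss_eq_iSup]
  refine iSup_le fun p => ?_
  have := sum_le_Diss_add_Diss (z := z) hDtri p.τ_zero p.N p.lt_succ
    (hmt.trans_eq p.τ_last.symm)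
  rwa [p.τ_last] at this

end Dissipation

section Measurability

variable {X : Type*} [NormedAddCommGroup X] {D : X → X → ℝ≥0∞} {cD : ℝ} {z : ℝ → X} {a b : ℝ}

theorem mul_norm_sub_le_toReal_Diss_sub (hcD : 0 ≤ cD)
    (hDcoer : ∀ x y : X, ENNReal.ofReal (cD * ‖y - x‖) ≤ D x y) {r u : ℝ} (har : a ≤ r)
    (hru : r ≤ u) (hfin : Diss D z a u ≠ ⊤) :
    cD * ‖z u - z r‖ ≤ (Diss D z a u).toReal - (Diss D z a r).toReal := by
  rcases hru.eq_or_lt with rfl | hru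
  · simp
  have hfin_r : Diss D z a r ≠ ⊤ := ne_top_of_le_ne_top hfin (Diss_mono_right har hru.le)
  have hstep : Diss D z a r + ENNReal.ofReal (cD * ‖z u - z r‖) ≤ Diss D z a u :=
    (add_le_add le_rfl (hDcoer _ _)).trans (Diss_add_le har hru)
  have := ENNReal.toReal_mono hfin hstep
  rw [ENNReal.toReal_add hfin_r ENNReal.ofReal_ne_top,
    ENNReal.toReal_ofReal (by positivity)] at this
  linarith

theorem aestronglyMeasurable_of_Diss_ne_top (hcD : 0 < cD)
    (hDcoer : ∀ x y : X, ENNReal.ofReal (cD * ‖y - x‖) ≤ D x y) (h : Diss D z a b ≠ ⊤) :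
    AEStronglyMeasurable z (volume.restrict (Icc a b)) := by
  set v : ℝ → ℝ := fun r => (Diss D z a r).toReal
  have hfin : ∀ r ∈ Icc a b, Diss D z a r ≠ ⊤ := fun r hr =>
    ne_top_of_le_ne_top h (Diss_mono_right hr.1 hr.2)
  have hv : MonotoneOn v (Icc a b) := fun r hr u hu hru =>
    ENNReal.toReal_mono (hfin u hu) (Diss_mono_right hr.1 hru)
  have hbound : ∀ r ∈ Icc a b, ∀ u ∈ Icc a b, ‖z u - z r‖ ≤ |v u - v r| / cD := by
    intro r hr u hu
    rw [le_div_iff₀ hcD, mul_comm]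
    rcases le_total r u with hru | hur
    · exact (mul_norm_sub_le_toReal_Diss_sub hcD.le hDcoer hr.1 hru (hfin u hu)).trans
        (le_abs_self _)
    · rw [norm_sub_rev, abs_sub_comm]
      exact (mul_norm_sub_le_toReal_Diss_sub hcD.le hDcoer hu.1 hur (hfin r hr)).trans
        (le_abs_self _)
  set C := {x | x ∈ Icc a b ∧ ¬ContinuousWithinAt v (Icc a b) x}
  have hC : C.Countable := hv.countable_not_continuousWithinAt
  have hcont : ContinuousOn z (Icc a b \ C) := by
    intro x hx
    have hvx : ContinuousWithinAt v (Icc a b) x := not_not.1 fun hnot => hx.2 ⟨hx.1, hnot⟩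
    have hvx' : Tendsto (fun y => |v y - v x| / cD) (𝓝[Icc a b \ C] x) (𝓝 0) := by
      have := ((hvx.mono (sdiff_subset (t := C))).sub_const (v x)).abs.div_const cD
      simpa using this
    rw [ContinuousWithinAt, tendsto_iff_norm_sub_tendsto_zero]
    refine squeeze_zero' (Eventually.of_forall fun _ => norm_nonneg _) ?_ hvx'
    filter_upwards [self_mem_nhdsWithin] with y hy using hbound x hx.1 y hy.1
  rw [← Measure.restrict_congr_set (sdiff_null_ae_eq_self (hC.measure_zero volume))]
  exact hcont.aestronglyMeasurable (measurableSet_Icc.diff hC.measurableSet)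

end Measurability

theorem WeakConv.of_tendsto {X : Type*} [NormedAddCommGroup X] [NormedSpace ℝ X] {u : ℕ → X}
    {x : X} (h : Tendsto u atTop (𝓝 x)) : WeakConv u x :=
  fun f => (f.continuous.tendsto x).comp h

theorem lowerSemicontinuous_of_weakConv {X : Type*} [NormedAddCommGroup X] [NormedSpace ℝ X]
    {F : X → ℝ≥0∞} (hF : ∀ (u : ℕ → X) (x : X), WeakConv u x →
      F x ≤ liminf (fun j => F (u j)) atTop) :
    LowerSemicontinuous F := by
  refine lowerSemicontinuous_iff_isClosed_preimage.2 fun c =>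
    IsSeqClosed.isClosed fun u x hu hx => ?_
  exact (hF u x (.of_tendsto hx)).trans
    ((liminf_le_liminf (Eventually.of_forall hu)).trans (by simp))

theorem HasDerivWithinAt.tendsto_forward_difference {g : ℝ → ℝ} {g' a b s : ℝ}
    (hg : HasDerivWithinAt g g' (Icc a b) s) (has : a ≤ s) (hsb : s < b) :
    Tendsto (fun n : ℕ => ((n : ℝ) + 1) * (g (s + 1 / ((n : ℝ) + 1)) - g s)) atTop (𝓝 g') := by
  have hstep : Tendsto (fun n : ℕ => s + 1 / ((n : ℝ) + 1)) atTop (𝓝[Icc a b \ {s}] s) := by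
    refine tendsto_nhdsWithin_iff.2
      ⟨by simpa using tendsto_one_div_add_atTop_nhds_zero_nat.const_add s, ?_⟩
    filter_upwards [tendsto_one_div_add_atTop_nhds_zero_nat.eventually_lt_const
      (sub_pos.2 hsb)] with n hn
    have : (0 : ℝ) < 1 / ((n : ℝ) + 1) := by positivity
    exact ⟨⟨by linarith, by linarith⟩, by simpa using this.ne'⟩
  refine ((hasDerivWithinAt_iff_tendsto_slope.1 hg).comp hstep).congr fun n => ?_
  simp [slope_def_field]
  field_simp

def HasBoundedTimeDerivOn {X : Type*} (I : ℝ → X → ℝ≥0∞) (DI : ℝ → X → ℝ) (CI a b : ℝ) : Prop :=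
  ∀ w : X, (∃ s ∈ Icc a b, I s w ≠ ⊤) →
    ∀ s ∈ Icc a b, I s w ≠ ⊤ ∧
      HasDerivWithinAt (fun τ => (I τ w).toReal) (DI s w) (Icc a b) s ∧ |DI s w| ≤ CI

namespace HasBoundedTimeDerivOn

variable {X : Type*} {I : ℝ → X → ℝ≥0∞} {DI : ℝ → X → ℝ} {CI a b : ℝ}

theorem continuous_clamp (hI : HasBoundedTimeDerivOn I DI CI a b) (hab : a ≤ b) (w : X) :
    Continuous fun τ => (I (max a (min b τ)) w).toReal := by
  have hclamp : ∀ τ, max a (min b τ) ∈ Icc a b := fun τ =>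
    ⟨le_max_left _ _, max_le hab (min_le_left _ _)⟩
  by_cases hw : ∃ s ∈ Icc a b, I s w ≠ ⊤
  · exact ContinuousOn.comp_continuous (g := fun τ => (I τ w).toReal)
      (fun s hs => (hI w hw s hs).2.1.continuousWithinAt) (by fun_prop) hclamp
  · push Not at hw
    simpa [hw _ (hclamp _)] using continuous_const

theorem measurable_uncurry_clamp [MeasurableSpace X] (hI : HasBoundedTimeDerivOn I DI CI a b)
    (hab : a ≤ b) (hImeas : ∀ s ∈ Icc a b, Measurable (I s)) :
    Measurable fun p : ℝ × X => (I (max a (min b p.1)) p.2).toReal :=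
  measurable_uncurry_of_continuous_of_measurable (u := fun τ w => (I (max a (min b τ)) w).toReal)
    (hI.continuous_clamp hab) fun _ =>
      (hImeas _ ⟨le_max_left _ _, max_le hab (min_le_left _ _)⟩).ennreal_toReal

theorem intervalIntegrable_comp [NormedAddCommGroup X] [MeasurableSpace X] [BorelSpace X]
    (hI : HasBoundedTimeDerivOn I DI CI a b) (hImeas : ∀ s ∈ Icc a b, Measurable (I s))
    {z : ℝ → X} {t0 t1 : ℝ} (ha : a ≤ t0) (h01 : t0 ≤ t1) (hb : t1 ≤ b)
    (hz : AEStronglyMeasurable z (volume.restrict (Icc t0 t1)))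
    (hfin : ∀ s ∈ Ico t0 t1, I s (z s) ≠ ⊤) :
    IntervalIntegrable (fun s => DI s (z s)) volume t0 t1 := by
  set μ := volume.restrict (Ico t0 t1)
  set F := fun p : ℝ × X => (I (max a (min b p.1)) p.2).toReal
  have hF : Measurable F := hI.measurable_uncurry_clamp (ha.trans (h01.trans hb)) hImeas
  have hzμ : AEMeasurable z μ :=
    (hz.mono_measure (Measure.restrict_mono Ico_subset_Icc_self le_rfl)).aemeasurable
  have hquot : ∀ n : ℕ, AEMeasurable
      (fun s => ((n : ℝ) + 1) * (F (s + 1 / ((n : ℝ) + 1), z s) - F (s, z s))) μ := fun n =>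
    ((hF.comp_aemeasurable ((measurable_id.add_const _).aemeasurable.prodMk hzμ)).sub
      (hF.comp_aemeasurable (aemeasurable_id.prodMk hzμ))).const_mul _
  have hmem : ∀ᵐ s ∂μ, s ∈ Ico t0 t1 := ae_restrict_mem measurableSet_Ico
  have hlim : ∀ᵐ s ∂μ, Tendsto (fun n : ℕ => ((n : ℝ) + 1) *
      (F (s + 1 / ((n : ℝ) + 1), z s) - F (s, z s))) atTop (𝓝 (DI s (z s))) := by
    filter_upwards [hmem] with s hs
    have hsab : s ∈ Icc a b := ⟨ha.trans hs.1, hs.2.le.trans hb⟩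
    have hsb : s < b := hs.2.trans_le hb
    have hder := (hI (z s) ⟨s, hsab, hfin s hs⟩ s hsab).2.1
    refine (hder.tendsto_forward_difference hsab.1 hsb).congr' ?_
    filter_upwards [tendsto_one_div_add_atTop_nhds_zero_nat.eventually_lt_const
      (sub_pos.2 hsb)] with n hn
    have : (0 : ℝ) < 1 / ((n : ℝ) + 1) := by positivity
    simp only [F, min_eq_right (by linarith : s + 1 / ((n : ℝ) + 1) ≤ b),
      max_eq_right (by linarith [hsab.1] : a ≤ s + 1 / ((n : ℝ) + 1)), min_eq_right hsab.2,
      max_eq_right hsab.1]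
  have hbound : ∀ᵐ s ∂μ, ‖DI s (z s)‖ ≤ CI := by
    filter_upwards [hmem] with s hs
    have hsab : s ∈ Icc a b := ⟨ha.trans hs.1, hs.2.le.trans hb⟩
    exact (hI (z s) ⟨s, hsab, hfin s hs⟩ s hsab).2.2
  rw [intervalIntegrable_iff_integrableOn_Ico_of_le h01]
  exact Integrable.of_bound
    (aemeasurable_of_tendsto_metrizable_ae' hquot hlim).aestronglyMeasurable CI hbound

end HasBoundedTimeDerivOn

theorem ne_top_of_coe_add_le_coe_add {x y c : ℝ≥0∞} {r : ℝ} (hc : c ≠ ⊤)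
    (h : (x : EReal) + y ≤ c + r) : x ≠ ⊤ ∧ y ≠ ⊤ := by
  have hlt : (c : EReal) + r < ⊤ :=
    EReal.add_lt_top (by simpa using hc) (EReal.coe_ne_top r)
  constructor <;> rintro rfl <;> simp at h <;> exact hlt.ne h

theorem energy_ineq_trans {x₀ x₁ x₂ d d₁ d₂ : ℝ≥0∞} {r₁ r₂ : ℝ} (hd : d ≤ d₁ + d₂)
    (h₁ : (x₁ : EReal) + d₁ ≤ x₀ + r₁) (h₂ : (x₂ : EReal) + d₂ ≤ x₁ + r₂) :
    (x₂ : EReal) + d ≤ x₀ + ((r₁ + r₂ : ℝ) : EReal) := by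
  rcases eq_or_ne x₀ ⊤ with rfl | hx₀
  · simp
  obtain ⟨hx₁, hd₁⟩ := ne_top_of_coe_add_le_coe_add hx₀ h₁
  obtain ⟨hx₂, hd₂⟩ := ne_top_of_coe_add_le_coe_add hx₁ h₂
  have hd' : d ≠ ⊤ := ne_top_of_le_ne_top (ENNReal.add_ne_top.2 ⟨hd₁, hd₂⟩) hd
  have hdr := ENNReal.toReal_mono (ENNReal.add_ne_top.2 ⟨hd₁, hd₂⟩) hd
  rw [ENNReal.toReal_add hd₁ hd₂] at hdr
  rw [← EReal.coe_ennreal_toReal hx₀, ← EReal.coe_ennreal_toReal hx₁,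
    ← EReal.coe_ennreal_toReal hd₁, ← EReal.coe_ennreal_toReal hx₂,
    ← EReal.coe_ennreal_toReal hd₂, ← EReal.coe_ennreal_toReal hd'] at *
  norm_cast at *
  linarith

namespace IsSolutionOn

variable {X : Type*} [NormedAddCommGroup X] {D : X → X → ℝ≥0∞} {I : ℝ → X → ℝ≥0∞}
  {DI : ℝ → X → ℝ} {z : ℝ → X} {cD CI a m b : ℝ}

theorem congr (h : IsSolutionOn D I DI z a b) {z' : ℝ → X} (hz : EqOn z z' (Icc a b)) :
    IsSolutionOn D I DI z' a b := by
  refine ⟨fun s hs w => hz hs ▸ h.1 s hs w, fun t0 t1 ht0 h01 ht1 => ?_⟩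
  have hsub : Icc t0 t1 ⊆ Icc a b := Icc_subset_Icc ht0 ht1
  have hint : ∫ s in t0..t1, DI s (z s) = ∫ s in t0..t1, DI s (z' s) :=
    intervalIntegral.integral_congr fun s hs =>
      congrArg (DI s) (hz (hsub (uIcc_of_le h01.le ▸ hs)))
  rw [← hz (hsub (left_mem_Icc.2 h01.le)), ← hz (hsub (right_mem_Icc.2 h01.le)),
    ← Diss_congr (hz.mono hsub), ← hint]
  exact h.2 t0 t1 ht0 h01 ht1

theorem energy_ne_top (h : IsSolutionOn D I DI z a b) {t0 t1 : ℝ} (ht0 : a ≤ t0) (h01 : t0 < t1)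
    (ht1 : t1 ≤ b) (hfin : I t0 (z t0) ≠ ⊤) : I t1 (z t1) ≠ ⊤ ∧ Diss D z t0 t1 ≠ ⊤ :=
  ne_top_of_coe_add_le_coe_add hfin (h.2 t0 t1 ht0 h01 ht1)


theorem energy_ineq_of_concat (hcD : 0 < cD) (hDtri : ∀ x y w : X, D x w ≤ D x y + D y w)
    (hDcoer : ∀ x y : X, ENNReal.ofReal (cD * ‖y - x‖) ≤ D x y)
    (hIlsc : ∀ s ∈ Icc a b, LowerSemicontinuous (I s)) (hI : HasBoundedTimeDerivOn I DI CI a b)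
    (h₁ : IsSolutionOn D I DI z a m) (h₂ : IsSolutionOn D I DI z m b) {t0 t1 : ℝ}
    (ht0 : a ≤ t0) (h0m : t0 < m) (hm1 : m < t1) (ht1 : t1 ≤ b) :
    (I t1 (z t1) : EReal) + (Diss D z t0 t1 : EReal)
      ≤ (I t0 (z t0) : EReal) + ((∫ s in t0..t1, DI s (z s) : ℝ) : EReal) := by
  rcases eq_or_ne (I t0 (z t0)) ⊤ with htop | hfin₀
  · simp [htop]
  have E₁ := h₁.2 t0 m ht0 h0m le_rfl
  have E₂ := h₂.2 m t1 le_rfl hm1 ht1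
  obtain ⟨hfin_m, hD₁⟩ := ne_top_of_coe_add_le_coe_add hfin₀ E₁
  have hD₂ := (ne_top_of_coe_add_le_coe_add hfin_m E₂).2
  have hsplit : Diss D z t0 t1 ≤ Diss D z t0 m + Diss D z m t1 := Diss_le_add hDtri hm1.le
  have hfin : ∀ s ∈ Ico t0 t1, I s (z s) ≠ ⊤ := by
    rintro s ⟨hs0, hs1⟩
    rcases hs0.eq_or_lt with rfl | hs0
    · exact hfin₀
    rcases le_or_gt s m with hsm | hsm
    · exact (h₁.energy_ne_top ht0 hs0 hsm hfin₀).1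
    · exact (h₂.energy_ne_top le_rfl hsm (hs1.le.trans ht1) hfin_m).1
  have hz := aestronglyMeasurable_of_Diss_ne_top hcD hDcoer
    (ne_top_of_le_ne_top (ENNReal.add_ne_top.2 ⟨hD₁, hD₂⟩) hsplit)
  borelize X
  have hint := hI.intervalIntegrable_comp (fun s hs => (hIlsc s hs).measurable) ht0
    (h0m.trans hm1).le ht1 hz hfin
  have hm : m ∈ uIcc t0 t1 := mem_uIcc_of_le h0m.le hm1.le
  rw [← intervalIntegral.integral_add_adjacent_intervals
    (hint.mono_set (uIcc_subset_uIcc_left hm)) (hint.mono_set (uIcc_subset_uIcc_right hm))]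
  exact energy_ineq_trans hsplit E₁ E₂

theorem concat (hcD : 0 < cD) (hDtri : ∀ x y w : X, D x w ≤ D x y + D y w)
    (hDcoer : ∀ x y : X, ENNReal.ofReal (cD * ‖y - x‖) ≤ D x y)
    (hIlsc : ∀ s ∈ Icc a b, LowerSemicontinuous (I s)) (hI : HasBoundedTimeDerivOn I DI CI a b)
    (h₁ : IsSolutionOn D I DI z a m) (h₂ : IsSolutionOn D I DI z m b) :
    IsSolutionOn D I DI z a b := by
  refine ⟨fun s hs w => ?_, fun t0 t1 ht0 h01 ht1 => ?_⟩
  · rcases le_or_gt s m with hsm | hsm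
    · exact h₁.1 s ⟨hs.1, hsm⟩ w
    · exact h₂.1 s ⟨hsm.le, hs.2⟩ w
  rcases le_or_gt t1 m with h1m | hm1
  · exact h₁.2 t0 t1 ht0 h01 h1m
  rcases le_or_gt m t0 with hm0 | h0m
  · exact h₂.2 t0 t1 hm0 h01 ht1
  exact energy_ineq_of_concat hcD hDtri hDcoer hIlsc hI h₁ h₂ ht0 h0m hm1 ht1

end IsSolutionOn

theorem concatenation_of_solutions_general
    {X : Type*} [NormedAddCommGroup X] [NormedSpace ℝ X]
    (T cD CI : ℝ) (hcD : 0 < cD)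
    -- `D` is a dissipation distance:
    (D : X → X → ℝ≥0∞)
    (hDtri : ∀ z1 z2 z3 : X, D z1 z3 ≤ D z1 z2 + D z2 z3)
    (hDcoer : ∀ z0 z1 : X, ENNReal.ofReal (cD * ‖z1 - z0‖) ≤ D z0 z1)
    -- `I` is an energy-storage functional with partial time derivative `DI`:
    (I : ℝ → X → ℝ≥0∞) (DI : ℝ → X → ℝ)
    (hIlsc : ∀ s ∈ Icc (0:ℝ) T, ∀ (u : ℕ → X) (z : X), WeakConv u z →
      I s z ≤ liminf (fun j => I s (u j)) atTop)
    (hIsmooth : ∀ z : X, (∃ s ∈ Icc (0:ℝ) T, I s z ≠ ⊤) →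
      ∀ s ∈ Icc (0:ℝ) T, I s z ≠ ⊤ ∧
        HasDerivWithinAt (fun τ => (I τ z).toReal) (DI s z) (Icc (0:ℝ) T) s ∧
        |DI s z| ≤ CI)
    (tm : ℝ) (htm0 : 0 < tm)
    (z1 z2 : ℝ → X)
    (h1 : IsSolutionOn D I DI z1 0 tm)
    (h2 : IsSolutionOn D I DI z2 tm T)
    (hmatch : z1 tm = z2 tm)
    (z : ℝ → X)
    (hzle : ∀ s : ℝ, 0 ≤ s → s ≤ tm → z s = z1 s)
    (hzgt : ∀ s : ℝ, tm < s → s ≤ T → z s = z2 s) :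
    IsSolutionOn D I DI z 0 T := by
  have hz₁ : IsSolutionOn D I DI z 0 tm := h1.congr fun s hs => (hzle s hs.1 hs.2).symm
  have hz₂ : IsSolutionOn D I DI z tm T := h2.congr fun s hs => by
    rcases hs.1.eq_or_lt with hs' | hs'
    · rw [← hs', ← hmatch, hzle tm htm0.le le_rfl]
    · exact (hzgt s hs' hs.2).symm
  exact hz₁.concat hcD hDtri hDcoer (fun s hs => lowerSemicontinuous_of_weakConv (hIlsc s hs))
    hIsmooth hz₂

/-- Concatenation of solutions: if `z1` solves (S) & (E) on `[0,t]`, `z2` solves (S) & (E)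
on `[t,T]` and `z1 t = z2 t`, then the concatenated curve solves (S) & (E) on `[0,T]`. -/
theorem concatenation_of_solutions
    {X : Type*} [NormedAddCommGroup X] [NormedSpace ℝ X] [CompleteSpace X]
    (T cD CI : ℝ) (hT : 0 < T) (hcD : 0 < cD) (hCI : 0 < CI)
    -- `D` is a dissipation distance:
    (D : X → X → ℝ≥0∞)
    (hD0 : ∀ z : X, D z z = 0)
    (hDtri : ∀ z1 z2 z3 : X, D z1 z3 ≤ D z1 z2 + D z2 z3)
    (hDcoer : ∀ z0 z1 : X, ENNReal.ofReal (cD * ‖z1 - z0‖) ≤ D z0 z1)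
    (hDlsc : ∀ (u v : ℕ → X) (z w : X), WeakConv u z → WeakConv v w →
      D z w ≤ liminf (fun j => D (u j) (v j)) atTop)
    -- `I` is an energy-storage functional with partial time derivative `DI`:
    (I : ℝ → X → ℝ≥0∞) (DI : ℝ → X → ℝ)
    (hIlsc : ∀ s ∈ Icc (0:ℝ) T, ∀ (u : ℕ → X) (z : X), WeakConv u z →
      I s z ≤ liminf (fun j => I s (u j)) atTop)
    (hIsmooth : ∀ z : X, (∃ s ∈ Icc (0:ℝ) T, I s z ≠ ⊤) →
      ∀ s ∈ Icc (0:ℝ) T, I s z ≠ ⊤ ∧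
        HasDerivWithinAt (fun τ => (I τ z).toReal) (DI s z) (Icc (0:ℝ) T) s ∧
        |DI s z| ≤ CI)
    (tm : ℝ) (htm0 : 0 < tm) (htmT : tm < T)
    (z1 z2 : ℝ → X)
    (h1 : IsSolutionOn D I DI z1 0 tm)
    (h2 : IsSolutionOn D I DI z2 tm T)
    (hmatch : z1 tm = z2 tm)
    (z : ℝ → X)
    (hzle : ∀ s : ℝ, 0 ≤ s → s ≤ tm → z s = z1 s)
    (hzgt : ∀ s : ℝ, tm < s → s ≤ T → z s = z2 s) :
    IsSolutionOn D I DI z 0 T :=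
  concatenation_of_solutions_general T cD CI hcD D hDtri hDcoer I DI hIlsc hIsmooth tm htm0 z1 z2 h1
    h2 hmatch z hzle hzgt
end
end

section
/- (Rate independence under reparametrization.) Let α : [0,T'] → [0,T] be a continuously differentiable bijection with α(0) = 0, α(T') = T, and α'(t) > 0 for all t. Define Ĩ : [0,T'] × X → [0,∞] by Ĩ(t,ẑ) := I(α(t),ẑ). Then a curve z : [0,T] → X satisfies (S) and (E) for (D, I) on [0,T] if and only if the reparametrized curve z̃ := z ∘ α : [0,T'] → X satisfies (S) and (E) for (D, Ĩ) on [0,T']. -/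
open Filter Topology Set MeasureTheory
open scoped ENNReal

noncomputable section

private lemma tau_mono {τ : ℕ → ℝ} {N : ℕ} (h : ∀ j < N, τ j < τ (j + 1)) :
    ∀ i j, i ≤ j → j ≤ N → τ i ≤ τ j := by
  intro i j hij hjN
  induction j with
  | zero => simp_all
  | succ n ih =>
    rcases eq_or_lt_of_le hij with rfl | hlt
    · exact le_rfl
    · have hi : i ≤ n := Nat.lt_succ_iff.mp hlt
      have hn : n < N := Nat.lt_of_lt_of_le (Nat.lt_succ_self n) hjN
      exact (ih hi hn.le).trans (h n hn).le

private lemma diss_le {X : Type*} (D : X → X → ℝ≥0∞) (z z2 : ℝ → X) (α : ℝ → ℝ)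
    (s0 s1 : ℝ) (hmono : StrictMonoOn α (Icc s0 s1))
    (hz : ∀ t ∈ Icc s0 s1, z2 t = z (α t)) :
    Diss D z2 s0 s1 ≤ Diss D z (α s0) (α s1) := by
  refine iSup_le fun N => iSup_le fun τ => iSup_le fun h0 => iSup_le fun hN =>
    iSup_le fun hinc => ?_
  have hmem : ∀ i ≤ N, τ i ∈ Icc s0 s1 := fun i hi =>
    ⟨h0 ▸ tau_mono hinc 0 i (Nat.zero_le i) hi, hN ▸ tau_mono hinc i N hi le_rfl⟩
  have key : ∑ j ∈ Finset.range N, D (z2 (τ j)) (z2 (τ (j + 1)))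
      = ∑ j ∈ Finset.range N, D (z (α (τ (min j N)))) (z (α (τ (min (j + 1) N)))) := by
    refine Finset.sum_congr rfl fun j hj => ?_
    have hj' := Finset.mem_range.mp hj
    rw [min_eq_left hj'.le, min_eq_left hj', hz _ (hmem j hj'.le), hz _ (hmem (j + 1) hj')]
  rw [key]
  refine le_iSup_of_le N (le_iSup_of_le (fun j => α (τ (min j N))) ?_)
  have h0' : α (τ (min 0 N)) = α s0 := by rw [min_eq_left (Nat.zero_le N), h0]
  have hN' : α (τ (min N N)) = α s1 := by rw [min_self, hN]
  have hinc' : ∀ j < N, α (τ (min j N)) < α (τ (min (j + 1) N)) := by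
    intro j hj
    rw [min_eq_left hj.le, min_eq_left hj]
    exact hmono (hmem j hj.le) (hmem (j + 1) hj) (hinc j hj)
  exact le_iSup_of_le h0' (le_iSup_of_le hN' (le_iSup_of_le hinc' le_rfl))

private lemma image_Ioc_eq (α : ℝ → ℝ) (s0 s1 : ℝ) (hs : s0 ≤ s1)
    (hmono : StrictMonoOn α (Icc s0 s1)) (hcont : ContinuousOn α (Icc s0 s1)) :
    α '' Ioc s0 s1 = Ioc (α s0) (α s1) := by
  ext t
  constructor
  · rintro ⟨x, hx, rfl⟩
    have hx' : x ∈ Icc s0 s1 := ⟨hx.1.le, hx.2⟩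
    exact ⟨hmono (left_mem_Icc.mpr hs) hx' hx.1,
      hmono.monotoneOn hx' (right_mem_Icc.mpr hs) hx.2⟩
  · intro ht
    obtain ⟨x, hx, hxt⟩ := intermediate_value_Icc hs hcont ⟨ht.1.le, ht.2⟩
    refine ⟨x, ⟨?_, hx.2⟩, hxt⟩
    rcases eq_or_lt_of_le hx.1 with rfl | h
    · exact absurd (hxt ▸ ht.1) (lt_irrefl _)
    · exact h

private lemma integral_subst (g α α' : ℝ → ℝ) (s0 s1 : ℝ) (hs : s0 ≤ s1)
    (hderiv : ∀ x ∈ Ioc s0 s1, HasDerivWithinAt α (α' x) (Ioc s0 s1) x)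
    (hinj : InjOn α (Ioc s0 s1))
    (himg : α '' Ioc s0 s1 = Ioc (α s0) (α s1))
    (hposd : ∀ x ∈ Ioc s0 s1, 0 ≤ α' x)
    (hle : α s0 ≤ α s1) :
    ∫ t in α s0..α s1, g t = ∫ u in s0..s1, α' u * g (α u) := by
  rw [intervalIntegral.integral_of_le hle, intervalIntegral.integral_of_le hs, ← himg,
    MeasureTheory.integral_image_eq_integral_abs_deriv_smul measurableSet_Ioc hderiv hinj g]
  refine MeasureTheory.setIntegral_congr_fun measurableSet_Ioc fun x hx => ?_
  simp [abs_of_nonneg (hposd x hx), smul_eq_mul]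

/-- Rate independence: for a continuously differentiable, strictly increasing
reparametrization `α : [0,T'] → [0,T]` of time, `z` solves (S) & (E) for `(D, I)` on `[0,T]`
if and only if `z ∘ α` solves (S) & (E) for `(D, Ĩ)` on `[0,T']`, where `Ĩ(t,w) = I(α t, w)`
(whose partial time derivative is `α' t * ∂ₜI(α t, w)`). -/
theorem rate_independence_reparametrization
    {X : Type*} [NormedAddCommGroup X] [NormedSpace ℝ X] [CompleteSpace X]
    (T cD CI : ℝ) (hT : 0 < T) (hcD : 0 < cD) (hCI : 0 < CI)
    -- `D` is a dissipation distance: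
    (D : X → X → ℝ≥0∞)
    (hD0 : ∀ z : X, D z z = 0)
    (hDtri : ∀ z1 z2 z3 : X, D z1 z3 ≤ D z1 z2 + D z2 z3)
    (hDcoer : ∀ z0 z1 : X, ENNReal.ofReal (cD * ‖z1 - z0‖) ≤ D z0 z1)
    (hDlsc : ∀ (u v : ℕ → X) (z w : X), WeakConv u z → WeakConv v w →
      D z w ≤ liminf (fun j => D (u j) (v j)) atTop)
    -- `I` is an energy-storage functional with partial time derivative `DI`:
    (I : ℝ → X → ℝ≥0∞) (DI : ℝ → X → ℝ)
    (hIlsc : ∀ s ∈ Icc (0:ℝ) T, ∀ (u : ℕ → X) (z : X), WeakConv u z →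
      I s z ≤ liminf (fun j => I s (u j)) atTop)
    (hIsmooth : ∀ z : X, (∃ s ∈ Icc (0:ℝ) T, I s z ≠ ⊤) →
      ∀ s ∈ Icc (0:ℝ) T, I s z ≠ ⊤ ∧
        HasDerivWithinAt (fun τ => (I τ z).toReal) (DI s z) (Icc (0:ℝ) T) s ∧
        |DI s z| ≤ CI)
    (T' : ℝ) (hT' : 0 < T')
    (α α' : ℝ → ℝ)
    (hbij : BijOn α (Icc (0:ℝ) T') (Icc (0:ℝ) T))
    (hα0 : α 0 = 0) (hαT : α T' = T)
    (hderiv : ∀ s ∈ Icc (0:ℝ) T', HasDerivWithinAt α (α' s) (Icc (0:ℝ) T') s)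
    (hcont : ContinuousOn α' (Icc (0:ℝ) T'))
    (hpos : ∀ s ∈ Icc (0:ℝ) T', 0 < α' s)
    (z : ℝ → X) :
    IsSolutionOn D I DI z 0 T ↔
      IsSolutionOn D (fun s w => I (α s) w) (fun s w => α' s * DI (α s) w)
        (fun s => z (α s)) 0 T' := by
  -- Basic facts about α
  classical
  have hsubIcc : ∀ {s0 s1 : ℝ}, 0 ≤ s0 → s1 ≤ T' → Icc s0 s1 ⊆ Icc 0 T' :=
    fun {s0 s1} h0 h1 => Icc_subset_Icc h0 h1
  have hcα : ContinuousOn α (Icc 0 T') := fun x hx => (hderiv x hx).continuousWithinAt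
  have hmonoα : StrictMonoOn α (Icc 0 T') := by
    apply strictMonoOn_of_deriv_pos (convex_Icc 0 T') hcα
    intro x hx
    rw [interior_Icc] at hx
    have hx' : x ∈ Icc (0:ℝ) T' := ⟨hx.1.le, hx.2.le⟩
    have : HasDerivAt α (α' x) x :=
      (hderiv x hx').hasDerivAt (Icc_mem_nhds hx.1 hx.2)
    rw [this.deriv]
    exact hpos x hx'
  set β : ℝ → ℝ := Function.invFunOn α (Icc 0 T') with hβdef
  have hmapsβ : MapsTo β (Icc 0 T) (Icc 0 T') := hbij.surjOn.mapsTo_invFunOn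
  have hright : ∀ t ∈ Icc (0:ℝ) T, α (β t) = t := fun t ht =>
    hbij.surjOn.rightInvOn_invFunOn ht
  have hmonoβ : StrictMonoOn β (Icc 0 T) := by
    intro x hx y hy hxy
    by_contra h
    push_neg at h
    have := hmonoα.monotoneOn (hmapsβ hy) (hmapsβ hx) h
    rw [hright x hx, hright y hy] at this
    exact absurd hxy (not_lt.mpr this)
  -- the integral substitution, packaged for a subinterval of [0,T']
  have hint : ∀ s0 s1 : ℝ, 0 ≤ s0 → s0 ≤ s1 → s1 ≤ T' →
      ∫ t in α s0..α s1, DI t (z t) = ∫ u in s0..s1, α' u * DI (α u) (z (α u)) := by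
    intro s0 s1 h0 hs h1
    have hsub : Icc s0 s1 ⊆ Icc 0 T' := hsubIcc h0 h1
    have hsub' : Ioc s0 s1 ⊆ Icc 0 T' := Ioc_subset_Icc_self.trans hsub
    have hmono' : StrictMonoOn α (Icc s0 s1) := hmonoα.mono hsub
    refine integral_subst _ α α' s0 s1 hs
      (fun x hx => (hderiv x (hsub' hx)).mono hsub')
      (hmono'.injOn.mono Ioc_subset_Icc_self)
      (image_Ioc_eq α s0 s1 hs hmono' (hcα.mono hsub))
      (fun x hx => (hpos x (hsub' hx)).le)
      (hmono'.monotoneOn (left_mem_Icc.mpr hs) (right_mem_Icc.mpr hs) hs)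
  constructor
  · rintro ⟨hS, hE⟩
    constructor
    · intro s hs w
      exact hS (α s) (hbij.mapsTo hs) w
    · intro s0 s1 h0 hs h1
      have hs0 : s0 ∈ Icc (0:ℝ) T' := ⟨h0, hs.le.trans h1⟩
      have hs1 : s1 ∈ Icc (0:ℝ) T' := ⟨h0.trans hs.le, h1⟩
      have hαs : α s0 < α s1 := hmonoα hs0 hs1 hs
      have hdiss : Diss D (fun t => z (α t)) s0 s1 ≤ Diss D z (α s0) (α s1) :=
        diss_le D z _ α s0 s1 (hmonoα.mono (hsubIcc h0 h1)) (fun t _ => rfl)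
      have h := hE (α s0) (α s1) (hbij.mapsTo hs0).1 hαs (hbij.mapsTo hs1).2
      rw [hint s0 s1 h0 hs.le h1] at h
      calc ((I (α s1) (z (α s1)) : ℝ≥0∞) : EReal) + (Diss D (fun t => z (α t)) s0 s1 : EReal)
          ≤ (I (α s1) (z (α s1)) : EReal) + (Diss D z (α s0) (α s1) : EReal) := by
            gcongr
            exact_mod_cast hdiss
        _ ≤ _ := h
  · rintro ⟨hS, hE⟩
    constructor
    · intro t ht w
      have h := hS (β t) (hmapsβ ht) w
      simp only at h
      rwa [hright t ht] at h
    · intro t0 t1 h0 ht h1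
      have ht0 : t0 ∈ Icc (0:ℝ) T := ⟨h0, ht.le.trans h1⟩
      have ht1 : t1 ∈ Icc (0:ℝ) T := ⟨h0.trans ht.le, h1⟩
      have hs01 : β t0 < β t1 := hmonoβ ht0 ht1 ht
      have hb0 := hmapsβ ht0
      have hb1 := hmapsβ ht1
      have hdiss : Diss D z t0 t1 ≤ Diss D (fun t => z (α t)) (β t0) (β t1) := by
        have := diss_le D (fun t => z (α t)) z β t0 t1 (hmonoβ.mono (Icc_subset_Icc h0 h1))
          (fun t htm => (congrArg z (hright t (Icc_subset_Icc h0 h1 htm))).symm)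
        exact this
      have h := hE (β t0) (β t1) hb0.1 hs01 hb1.2
      have hintβ := hint (β t0) (β t1) hb0.1 hs01.le hb1.2
      simp only at h
      rw [hright t0 ht0, hright t1 ht1] at hintβ h
      rw [hintβ]
      calc ((I t1 (z t1) : ℝ≥0∞) : EReal) + (Diss D z t0 t1 : EReal)
          ≤ (I t1 (z t1) : EReal) + (Diss D (fun t => z (α t)) (β t0) (β t1) : EReal) := by
            gcongr
            exact_mod_cast hdiss
        _ ≤ _ := h
end
end
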